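/- arXiv:2204.10478 — 4 statements merged into one kernel-verified Lean document; each statement's English description precedes it below -/
import Mathlib

section
/- For every integer n ≥ 1, the regret of the second-price auction with random reserve distribution μ_n^* against the n-fold i.i.d. product of the isorevenue distribution with parameter r_n^* equals exactly (1 − r_n^*)^{n−1} − ∫_{r_n^*}^{1} (1 − r_n^*/v)^{n−1} dv; that is, Regret(μ_n^*, (F_{r_n^*})^{⊗n}) = (1 − r_n^*)^{n−1} − ∫_{r_n^*}^{1} (1 − r_n^*/v)^{n−1} dv. -/
open MeasureTheory Real Set ENNReal

noncomputable section

/-- Largest coordinate of `v`. -/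
def top1 {n : ℕ} (v : Fin n → ℝ) : ℝ := ⨆ i, v i

/-- Second-largest coordinate of `v` (junk value `0` when `n = 1`). -/
def top2 {n : ℕ} (v : Fin n → ℝ) : ℝ := ⨅ i, ⨆ j ∈ ({i}ᶜ : Set (Fin n)), v j

/-- Regret of the second-price auction with random reserve `μ` against value distribution `G`. -/
def spaRegret (n : ℕ) (μ : Measure ℝ) (G : Measure (Fin n → ℝ)) : ℝ :=
  ∫ v in Set.Icc (0 : Fin n → ℝ) 1,
    (top1 v - ∫ p in Set.Icc (0:ℝ) 1, (if p ≤ top1 v then max (top2 v) p else 0) ∂μ) ∂G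

def gfun (n : ℕ) (r : ℝ) : ℝ :=
  (1 - r) ^ (n - 1) + Real.log r + ∑ k ∈ Finset.Icc 1 (n-1), (1 - r) ^ k / (k : ℝ)

def Phi (n : ℕ) (rs : ℝ) (v : ℝ) : ℝ :=
  if v ≤ rs then 0
  else (v / (v - rs)) ^ (n - 1) * Real.log (v / rs)
       - ∑ k ∈ Finset.Icc 1 (n-1), (1 / (k:ℝ)) * (v / (v - rs)) ^ (n - 1 - k)

def PhiExt (n : ℕ) (rs : ℝ) (v : ℝ) : ℝ := if v ≤ 1 then Phi n rs v else 1

def isoCDF (r : ℝ) (v : ℝ) : ℝ := if v < r then 0 else if v < 1 then 1 - r / v else 1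

/-- Regret of a direct mechanism with payment rule `p` against value distribution `G`. -/
def mechRegret (n : ℕ) (p : (Fin n → ℝ) → Fin n → ℝ) (G : Measure (Fin n → ℝ)) : ℝ :=
  ∫ v in Set.Icc (0 : Fin n → ℝ) 1, (top1 v - ∑ i, p v i) ∂G

/-- Dominant-strategy incentive compatible mechanism for `n` buyers with values in `[0,1]`. -/
def DSIC (n : ℕ) (x p : (Fin n → ℝ) → Fin n → ℝ) : Prop :=
  Measurable x ∧ Measurable p ∧ (∃ C, ∀ v i, |p v i| ≤ C) ∧
  ∀ v ∈ Set.Icc (0 : Fin n → ℝ) 1, (∑ j, x v j) ≤ 1 ∧ ∀ i,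
    0 ≤ x v i ∧ 0 ≤ v i * x v i - p v i ∧
    ∀ w ∈ Set.Icc (0:ℝ) 1,
      v i * x (Function.update v i w) i - p (Function.update v i w) i ≤ v i * x v i - p v i

def Exchangeable (n : ℕ) (μ : Measure (Fin n → ℝ)) : Prop :=
  ∀ σ : Equiv.Perm (Fin n), Measure.map (fun v i => v (σ i)) μ = μ

def Affiliated (n : ℕ) (μ : Measure (Fin n → ℝ)) : Prop :=
  ∃ (lam : Measure ℝ) (f : (Fin n → ℝ) → ℝ≥0∞), Measurable f ∧
    μ = (Measure.pi fun _ : Fin n => lam).withDensity f ∧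
    ∀ᵐ q ∂((Measure.pi fun _ : Fin n => lam).prod (Measure.pi fun _ : Fin n => lam)),
      f q.1 * f q.2 ≤ f (q.1 ⊓ q.2) * f (q.1 ⊔ q.2)

def worstCase (n : ℕ) (p : (Fin n → ℝ) → Fin n → ℝ) (C : Set (Measure (Fin n → ℝ))) : ℝ :=
  sSup {w | ∃ G ∈ C, w = mechRegret n p G}

def minimaxRegret (n : ℕ) (C : Set (Measure (Fin n → ℝ))) : ℝ :=
  sInf {w | ∃ x p, DSIC n x p ∧ w = worstCase n p C}

def iidClass (n : ℕ) : Set (Measure (Fin n → ℝ)) :=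
  {G | ∃ F : Measure ℝ, IsProbabilityMeasure F ∧ F (Set.Icc 0 1) = 1 ∧
        G = Measure.pi fun _ => F}

def affClass (n : ℕ) : Set (Measure (Fin n → ℝ)) :=
  {G | IsProbabilityMeasure G ∧ G (Set.Icc 0 1) = 1 ∧ Exchangeable n G ∧ Affiliated n G}

def exchClass (n : ℕ) : Set (Measure (Fin n → ℝ)) :=
  {G | IsProbabilityMeasure G ∧ G (Set.Icc 0 1) = 1 ∧ Exchangeable n G}

def allClass (n : ℕ) : Set (Measure (Fin n → ℝ)) :=
  {G | IsProbabilityMeasure G ∧ G (Set.Icc 0 1) = 1}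

/-!
Write `a = top1 v`, `b = top2 v` and `W` for the CDF of the reserve. By Fubini, the revenue at
values `v` is `a * W a - ∫_{[b,a)} W`, so the regret is `E[a (1 - W a)] + E[∫_{[b,a)} W]`.
Against the `n`-fold isorevenue product, the maximum has density `f` on `(r, 1)` and an atom at
`1`, which `W 1 = 1` kills, so the first term is `∫ s f(s) (1 - W s)`; by Tonelli the second is
`∫ W(s) P(b ≤ s < a)`. Both weights `s f(s)` and `P(b ≤ s < a)` equal
`q(s) = n (r / s) (1 - r / s)^(n-1)` on `(r, 1)`, so `W` cancels: every reserve distribution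
supported in `(r, 1]` has regret `∫_r^1 q`. The equation `g_n(r) = 0` is what turns an explicit
primitive of `q(s) + (1 - r / s)^(n-1)` into the value `(1 - r)^(n-1)`; it also gives `Φ(1) = 1`.
-/

section OrderStatistics

variable {n m : ℕ}

lemma measurable_top1 : Measurable (top1 (n := n)) :=
  Measurable.iSup fun i => measurable_pi_apply i

lemma measurable_top2 : Measurable (top2 (n := n)) :=
  Measurable.iInf fun _ => Measurable.iSup fun j => Measurable.iSup_Prop _ (measurable_pi_apply j)

lemma le_top1 (v : Fin n → ℝ) (i : Fin n) : v i ≤ top1 v :=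
  le_ciSup (Finite.bddAbove_range v) i

lemma top1_le_iff {v : Fin (m + 1) → ℝ} {s : ℝ} : top1 v ≤ s ↔ ∀ i, v i ≤ s :=
  ciSup_le_iff (Finite.bddAbove_range v)

lemma le_iSup_compl_singleton (v : Fin n → ℝ) {i j : Fin n} (hji : j ≠ i) :
    v j ≤ ⨆ k ∈ ({i}ᶜ : Set (Fin n)), v k := by
  refine le_ciSup_of_le (Finite.bddAbove_range _) j ?_
  rw [ciSup_pos (by simpa using hji)]

lemma top2_le {v : Fin n → ℝ} (i : Fin n) {s : ℝ} (hs : 0 ≤ s)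
    (h : ∀ j, j ≠ i → v j ≤ s) : top2 v ≤ s :=
  (ciInf_le (Finite.bddBelow_range _) i).trans
    (Real.iSup_le (fun j => Real.iSup_le (fun hj => h j (by simpa using hj)) hs) hs)

lemma top2_nonneg (v : Fin n → ℝ) : 0 ≤ top2 v :=
  Real.iInf_nonneg fun i => le_ciSup_of_le (Finite.bddAbove_range _) i (by simp)

lemma top2_le_top1 {v : Fin (m + 1) → ℝ} (hv : 0 ≤ v) : top2 v ≤ top1 v :=
  top2_le 0 ((hv 0).trans (le_top1 v 0)) fun j _ => le_top1 v j

/-- `top2 v` is never negative (the term `j = i` of `⨆ j ∈ {i}ᶜ` is an empty supremum, that is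
`0`), hence the hypothesis `0 ≤ s`. -/
lemma top2_le_and_lt_top1_iff {v : Fin (m + 1) → ℝ} {s : ℝ} (hs : 0 ≤ s) :
    top2 v ≤ s ∧ s < top1 v ↔ ∃ i, s < v i ∧ ∀ j, j ≠ i → v j ≤ s := by
  constructor
  · rintro ⟨h2, h1⟩
    obtain ⟨i, hi⟩ := exists_lt_of_lt_ciSup h1
    refine ⟨i, hi, fun j hji => not_lt.1 fun hj => h2.not_gt ?_⟩
    obtain ⟨k, hk⟩ := exists_eq_ciInf_of_finite
      (f := fun k => ⨆ l ∈ ({k}ᶜ : Set (Fin (m + 1))), v l)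
    rw [top2, ← hk]
    rcases eq_or_ne k i with rfl | hki
    · exact hj.trans_le (le_iSup_compl_singleton v hji)
    · exact hi.trans_le (le_iSup_compl_singleton v hki.symm)
  · rintro ⟨i, hi, hall⟩
    exact ⟨top2_le i hs hall, hi.trans_le (le_top1 v i)⟩

end OrderStatistics

section ProductMeasure

variable {m : ℕ} {ν : Measure ℝ} [SigmaFinite ν]

lemma pi_top1_le (x : ℝ) :
    Measure.pi (fun _ : Fin (m + 1) => ν) {v | top1 v ≤ x} = ν (Iic x) ^ (m + 1) := by
  have hset : {v : Fin (m + 1) → ℝ | top1 v ≤ x} = Set.pi univ fun _ => Iic x := by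
    ext v
    simp only [mem_ofPred_eq, top1_le_iff, mem_univ_pi, mem_Iic]
  rw [hset, Measure.pi_pi]
  simp

lemma pi_top2_le_and_lt_top1 {s : ℝ} (hs : 0 ≤ s) :
    Measure.pi (fun _ : Fin (m + 1) => ν) {v | top2 v ≤ s ∧ s < top1 v}
      = (m + 1) * (ν (Ioi s) * ν (Iic s) ^ m) := by
  set E : Fin (m + 1) → Set (Fin (m + 1) → ℝ) :=
    fun i => Set.pi univ fun j => if j = i then Ioi s else Iic s
  have hset : {v | top2 v ≤ s ∧ s < top1 v} = ⋃ i, E i := by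
    ext v
    simp only [mem_ofPred_eq, top2_le_and_lt_top1_iff hs, mem_iUnion, E, mem_univ_pi]
    refine exists_congr fun i =>
      ⟨fun ⟨hi, h⟩ j => ?_, fun h => ⟨by simpa using h i, fun j hj => ?_⟩⟩
    · split_ifs with hj
      · exact hj ▸ hi
      · exact h j hj
    · simpa [hj] using h j
  have hdisj : Pairwise (Function.onFun Disjoint E) := fun i j hij =>
    Set.disjoint_left.2 fun v hi hj => by
      have h1 : s < v i := by simpa using hi i (mem_univ i)
      have h2 : v i ≤ s := by simpa [hij] using hj i (mem_univ i)
      exact h1.not_ge h2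
  have hmeas : ∀ i, MeasurableSet (E i) := fun i => MeasurableSet.univ_pi fun j => by
    split_ifs
    exacts [measurableSet_Ioi, measurableSet_Iic]
  have hE : ∀ i, Measure.pi (fun _ => ν) (E i) = ν (Ioi s) * ν (Iic s) ^ m := fun i => by
    simp [E, Measure.pi_pi, apply_ite ν, Finset.prod_ite, Finset.filter_ne', Finset.filter_eq']
  simp [hset, measure_iUnion hdisj hmeas, hE]

end ProductMeasure

section Fubini

variable {X : Type*} {a b : X → ℝ} {f : ℝ → ℝ} {S : Set ℝ}

lemma setIntegral_Ico_eq_integral_indicator (x : X) :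
    ∫ s in Ico (b x) (a x), f s =
      ∫ s, {p : X × ℝ | b p.1 ≤ p.2 ∧ p.2 < a p.1}.indicator (fun p => f p.2) (x, s) := by
  rw [← integral_indicator measurableSet_Ico]
  rfl

lemma setIntegral_Ico_indicator_of_subset {x : X} (hab : Ico (b x) (a x) ⊆ S) :
    ∫ s in Ico (b x) (a x), S.indicator f s = ∫ s in Ico (b x) (a x), f s :=
  setIntegral_congr_fun measurableSet_Ico fun _ hs => indicator_of_mem (hab hs) f

variable [MeasurableSpace X] {G : Measure X} [IsFiniteMeasure G]

lemma integrable_indicator_Ico_prod (ha : Measurable a) (hb : Measurable b) (hf : Integrable f) :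
    Integrable ({p : X × ℝ | b p.1 ≤ p.2 ∧ p.2 < a p.1}.indicator fun p => f p.2)
      (G.prod volume) :=
  (hf.comp_snd G).indicator <| (measurableSet_le (hb.comp measurable_fst) measurable_snd).inter
    (measurableSet_lt measurable_snd (ha.comp measurable_fst))

lemma integrable_setIntegral_Ico (ha : Measurable a) (hb : Measurable b) (hf : Integrable f) :
    Integrable (fun x : X => ∫ s in Ico (b x) (a x), f s) G := by
  simpa only [setIntegral_Ico_eq_integral_indicator] using
    (integrable_indicator_Ico_prod ha hb hf).integral_prod_left

lemma integral_setIntegral_Ico (ha : Measurable a) (hb : Measurable b) (hf : Integrable f) :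
    ∫ x, (∫ s in Ico (b x) (a x), f s) ∂G
      = ∫ s, f s * G.real {x | b x ≤ s ∧ s < a x} := by
  simp only [setIntegral_Ico_eq_integral_indicator]
  rw [integral_integral_swap (f := fun x s =>
    {p : X × ℝ | b p.1 ≤ p.2 ∧ p.2 < a p.1}.indicator (fun p => f p.2) (x, s))
    (integrable_indicator_Ico_prod ha hb hf)]
  refine integral_congr_ae (ae_of_all _ fun s => ?_)
  have hE : MeasurableSet {x | b x ≤ s ∧ s < a x} :=
    (measurableSet_le hb measurable_const).inter (measurableSet_lt measurable_const ha)
  dsimp only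
  rw [mul_comm, ← smul_eq_mul, ← integral_indicator_const _ hE]
  rfl

lemma integrable_setIntegral_Ico_of_subset (ha : Measurable a) (hb : Measurable b)
    (hS : MeasurableSet S) (hf : IntegrableOn f S) (hab : ∀ᵐ x ∂G, Ico (b x) (a x) ⊆ S) :
    Integrable (fun x : X => ∫ s in Ico (b x) (a x), f s) G :=
  (integrable_setIntegral_Ico ha hb ((integrable_indicator_iff hS).2 hf)).congr
    (hab.mono fun _ => setIntegral_Ico_indicator_of_subset)

lemma integral_setIntegral_Ico_of_subset (ha : Measurable a) (hb : Measurable b)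
    (hS : MeasurableSet S) (hf : IntegrableOn f S) (hab : ∀ᵐ x ∂G, Ico (b x) (a x) ⊆ S) :
    ∫ x, (∫ s in Ico (b x) (a x), f s) ∂G
      = ∫ s in S, f s * G.real {x | b x ≤ s ∧ s < a x} := by
  rw [← integral_congr_ae (hab.mono fun _ => setIntegral_Ico_indicator_of_subset),
    integral_setIntegral_Ico ha hb ((integrable_indicator_iff hS).2 hf), ← integral_indicator hS]
  simp only [indicator_mul_left]

end Fubini

lemma integral_ite_le_max (μ : Measure ℝ) [IsFiniteMeasure μ] {a b : ℝ} (hba : b ≤ a) :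
    ∫ p, (if p ≤ a then max b p else 0) ∂μ
      = a * μ.real (Iic a) - ∫ t in Ico b a, μ.real (Iic t) := by
  have hswap : ∫ t in Ico b a, μ.real (Iic t) = ∫ p, max (a - max b p) 0 ∂μ := by
    have hint : Integrable (Function.uncurry fun t p => (Iic t).indicator (1 : ℝ → ℝ) p)
        ((volume.restrict (Ico b a)).prod μ) :=
      (integrable_const (1 : ℝ)).indicator (measurableSet_le measurable_snd measurable_fst)
    calc ∫ t in Ico b a, μ.real (Iic t)
        = ∫ t in Ico b a, ∫ p, (Iic t).indicator 1 p ∂μ := by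
          simp only [integral_indicator_one measurableSet_Iic]
      _ = ∫ p, (∫ t in Ico b a, (Iic t).indicator 1 p) ∂μ := integral_integral_swap hint
      _ = ∫ p, (∫ t in Ico b a, (Ici p).indicator 1 t) ∂μ := by
          congr! 4 with p t
      _ = ∫ p, volume.real (Ico (max b p) a) ∂μ := by
          simp only [integral_indicator_one measurableSet_Ici, measureReal_restrict_apply
            measurableSet_Ici]
          congr! 3 with p
          ext t
          simp only [mem_inter_iff, mem_Ici, mem_Ico, max_le_iff]
          tauto
      _ = ∫ p, max (a - max b p) 0 ∂μ := by simp only [Real.volume_real_Ico]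
  have hint : Integrable (fun p => max (a - max b p) 0) μ := by
    refine Integrable.of_bound (by fun_prop) (a - b) (ae_of_all _ fun p => ?_)
    rw [Real.norm_of_nonneg (le_max_right _ _)]
    exact max_le (by linarith [le_max_left b p]) (by linarith)
  have hpt : ∀ p, (if p ≤ a then max b p else 0)
      = (Iic a).indicator (fun _ => a) p - max (a - max b p) 0 := by
    intro p
    by_cases hp : p ≤ a
    · simp [hp, max_le hba hp]
    · simp [hp, (not_le.1 hp).le]
  simp only [hpt]
  rw [integral_sub ((integrable_const a).indicator measurableSet_Iic) hint,
    integral_indicator_const _ measurableSet_Iic, hswap, smul_eq_mul, mul_comm]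

lemma spaRegret_eq_integral {m : ℕ} {μ : Measure ℝ} [IsFiniteMeasure μ]
    (hμ : ∀ᵐ p ∂μ, p ∈ Icc (0 : ℝ) 1) {G : Measure (Fin (m + 1) → ℝ)}
    (hG : ∀ᵐ v ∂G, v ∈ Icc 0 1) :
    spaRegret (m + 1) μ G = ∫ v, (top1 v * (1 - μ.real (Iic (top1 v)))
      + ∫ t in Ico (top2 v) (top1 v), μ.real (Iic t)) ∂G := by
  rw [spaRegret, Measure.restrict_eq_self_of_ae_mem hμ, Measure.restrict_eq_self_of_ae_mem hG]
  refine integral_congr_ae (hG.mono fun v hv => ?_)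
  dsimp only
  rw [integral_ite_le_max μ (top2_le_top1 hv.1)]
  ring

lemma ae_mem_Ioc_of_measure_Iic {μ : Measure ℝ} [IsProbabilityMeasure μ] {a b : ℝ}
    (ha : μ (Iic a) = 0) (hb : μ (Iic b) = 1) : ∀ᵐ x ∂μ, x ∈ Ioc a b := by
  have hIoi : μ (Ioi b) = 0 := by rwa [← compl_Iic, prob_compl_eq_zero_iff measurableSet_Iic]
  refine measure_mono_null (fun x hx => ?_) (measure_union_null ha hIoi)
  rcases le_or_gt x a with hxa | hxa
  · exact Or.inl hxa
  · exact Or.inr (not_le.1 fun hxb => hx ⟨hxa, hxb⟩)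

lemma ae_pi_mem_Icc {ι : Type*} [Fintype ι] {ν : Measure ℝ} [SigmaFinite ν]
    (hν : ∀ᵐ x ∂ν, x ∈ Icc (0 : ℝ) 1) :
    ∀ᵐ v ∂(Measure.pi fun _ : ι => ν), v ∈ Icc (0 : ι → ℝ) 1 :=
  ((Filter.eventually_pi fun _ => hν).filter_mono Measure.ae_pi_le_pi).mono
    fun _ hv => ⟨fun i => (hv i).1, fun i => (hv i).2⟩

section IsorevenueMaximum

variable {m : ℕ} {r : ℝ}

def isoMaxDensity (m : ℕ) (r s : ℝ) : ℝ := (m + 1) * (r / s ^ 2) * (1 - r / s) ^ m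

lemma hasDerivAt_one_sub_div (r : ℝ) {s : ℝ} (hs : s ≠ 0) :
    HasDerivAt (fun t => 1 - r / t) (r / s ^ 2) s := by
  simp only [div_eq_mul_inv]
  exact (((hasDerivAt_inv hs).const_mul r).const_sub 1).congr_deriv (by ring)

lemma hasDerivAt_one_sub_div_pow {s : ℝ} (hs : s ≠ 0) :
    HasDerivAt (fun t => (1 - r / t) ^ (m + 1)) (isoMaxDensity m r s) s := by
  refine ((hasDerivAt_one_sub_div r hs).pow (m + 1)).congr_deriv ?_
  simp only [isoMaxDensity, Nat.cast_add, Nat.cast_one, add_tsub_cancel_right]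
  ring

lemma isoMaxDensity_nonneg (hr : 0 < r) {s : ℝ} (hs : r ≤ s) : 0 ≤ isoMaxDensity m r s := by
  have : 0 ≤ 1 - r / s := sub_nonneg.2 (div_le_one_of_le₀ hs (hr.le.trans hs))
  unfold isoMaxDensity
  positivity

lemma continuousOn_isoMaxDensity (hr : 0 < r) : ContinuousOn (isoMaxDensity m r) (Ici r) := by
  have hne : ∀ s ∈ Ici r, s ≠ 0 := fun s hs => (hr.trans_le hs).ne'
  unfold isoMaxDensity
  exact continuousOn_const.mul (continuousOn_const.div (continuousOn_id.pow 2)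
    fun s hs => pow_ne_zero 2 (hne s hs)) |>.mul
    ((continuousOn_const.sub (continuousOn_const.div continuousOn_id hne)).pow m)

lemma integral_isoMaxDensity (hr : 0 < r) {x : ℝ} (hx : r ≤ x) :
    ∫ s in r..x, isoMaxDensity m r s = (1 - r / x) ^ (m + 1) := by
  have hIcc : uIcc r x ⊆ Ici r := by rw [uIcc_of_le hx]; exact Icc_subset_Ici_self
  rw [intervalIntegral.integral_eq_sub_of_hasDerivAt
    (fun s hs => hasDerivAt_one_sub_div_pow (hr.trans_le (hIcc hs)).ne')
    ((continuousOn_isoMaxDensity hr).mono hIcc).intervalIntegrable, div_self hr.ne']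
  simp

def isoMaxLaw (m : ℕ) (r : ℝ) : Measure ℝ :=
  (volume.restrict (Ioc r 1)).withDensity (fun s => ENNReal.ofReal (isoMaxDensity m r s))
    + ENNReal.ofReal (1 - (1 - r) ^ (m + 1)) • Measure.dirac 1

lemma lintegral_isoMaxDensity (hr : 0 < r) {x : ℝ} (hx : r ≤ x) :
    ∫⁻ s in Ioc r x, ENNReal.ofReal (isoMaxDensity m r s)
      = ENNReal.ofReal ((1 - r / x) ^ (m + 1)) := by
  rw [← ofReal_integral_eq_lintegral_ofReal, ← intervalIntegral.integral_of_le hx,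
    integral_isoMaxDensity hr hx]
  · exact ((continuousOn_isoMaxDensity hr).mono Icc_subset_Ici_self).integrableOn_Icc.mono_set
      Ioc_subset_Icc_self
  · exact (ae_restrict_iff' measurableSet_Ioc).2
      (ae_of_all _ fun s hs => isoMaxDensity_nonneg hr hs.1.le)

lemma isoMaxLaw_Iic (hr0 : 0 < r) (hr1 : r < 1) (x : ℝ) :
    isoMaxLaw m r (Iic x) = ENNReal.ofReal (isoCDF r x) ^ (m + 1) := by
  rw [isoMaxLaw, Measure.add_apply, Measure.smul_apply, withDensity_apply _ measurableSet_Iic,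
    Measure.restrict_restrict measurableSet_Iic, inter_comm, Ioc_inter_Iic,
    Measure.dirac_apply' _ measurableSet_Iic, smul_eq_mul, isoCDF]
  rcases lt_or_ge x r with hxr | hrx
  · rw [Ioc_eq_empty (not_lt.2 ((min_le_right _ _).trans hxr.le)),
      indicator_of_notMem (by simpa using hxr.trans hr1)]
    simp [hxr]
  have hr : r ≤ min 1 x := le_min hr1.le hrx
  rw [lintegral_isoMaxDensity hr0 hr, if_neg (not_lt.2 hrx)]
  rcases lt_or_ge x 1 with hx1 | hx1
  · have : 0 ≤ 1 - r / x := sub_nonneg.2 (div_le_one_of_le₀ hrx (hr0.le.trans hrx))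
    rw [min_eq_right hx1.le, indicator_of_notMem (by simpa using hx1), if_pos hx1,
      ENNReal.ofReal_pow this]
    simp
  · have h1 : (1 - r) ^ (m + 1) ≤ 1 := pow_le_one₀ (by linarith) (by linarith)
    rw [min_eq_left hx1, indicator_of_mem (show (1 : ℝ) ∈ Iic x from hx1),
      if_neg (not_lt.2 hx1),
      div_one, Pi.one_apply, mul_one, ← ENNReal.ofReal_add (by positivity) (by linarith)]
    simp

variable {ν : Measure ℝ} [IsProbabilityMeasure ν]

lemma map_top1_pi_iso (hr0 : 0 < r) (hr1 : r < 1)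
    (hν : ∀ x, ν (Iic x) = ENNReal.ofReal (isoCDF r x)) :
    (Measure.pi fun _ : Fin (m + 1) => ν).map top1 = isoMaxLaw m r :=
  Measure.ext_of_Iic _ _ fun x => by
    rw [Measure.map_apply measurable_top1 measurableSet_Iic, isoMaxLaw_Iic hr0 hr1, ← hν]
    exact pi_top1_le x

lemma integral_comp_top1_pi_iso (hr0 : 0 < r) (hr1 : r < 1)
    (hν : ∀ x, ν (Iic x) = ENNReal.ofReal (isoCDF r x)) {h : ℝ → ℝ} (hh : Measurable h)
    (hint : Integrable (fun v => h (top1 v)) (Measure.pi fun _ : Fin (m + 1) => ν)) :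
    ∫ v, h (top1 v) ∂(Measure.pi fun _ : Fin (m + 1) => ν)
      = (∫ s in Ioc r 1, isoMaxDensity m r s * h s) + (1 - (1 - r) ^ (m + 1)) * h 1 := by
  have hint' : Integrable h (isoMaxLaw m r) := by
    rw [← map_top1_pi_iso hr0 hr1 hν]
    exact (integrable_map_measure hh.aestronglyMeasurable measurable_top1.aemeasurable).2 hint
  obtain ⟨hint₁, hint₂⟩ := integrable_add_measure.1 hint'
  have hmass : 0 ≤ 1 - (1 - r) ^ (m + 1) :=
    sub_nonneg.2 (pow_le_one₀ (by linarith) (by linarith))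
  have hdens : Measurable fun s => (isoMaxDensity m r s).toNNReal := by
    unfold isoMaxDensity
    fun_prop
  have hwd : ∫ s, h s ∂(volume.restrict (Ioc r 1)).withDensity
      (fun s => ENNReal.ofReal (isoMaxDensity m r s))
      = ∫ s in Ioc r 1, isoMaxDensity m r s * h s :=
    (integral_withDensity_eq_integral_smul hdens h).trans
      (setIntegral_congr_fun measurableSet_Ioc fun s hs => by
        rw [NNReal.smul_def, Real.coe_toNNReal _ (isoMaxDensity_nonneg hr0 hs.1.le), smul_eq_mul])
  rw [← integral_map measurable_top1.aemeasurable hh.aestronglyMeasurable,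
    map_top1_pi_iso hr0 hr1 hν, isoMaxLaw, integral_add_measure hint₁ hint₂,
    integral_smul_measure,
    integral_dirac, ENNReal.toReal_ofReal hmass, smul_eq_mul, hwd]

end IsorevenueMaximum

section IsorevenueRegret

open ProbabilityTheory

variable {m : ℕ} {r : ℝ} {ν : Measure ℝ} [IsProbabilityMeasure ν]

def soleExceedProb (m : ℕ) (r s : ℝ) : ℝ := (m + 1) * (r / s) * (1 - r / s) ^ m

lemma continuousOn_soleExceedProb (hr : 0 < r) : ContinuousOn (soleExceedProb m r) (Ici r) := by
  have hne : ∀ s ∈ Ici r, s ≠ 0 := fun s hs => (hr.trans_le hs).ne'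
  unfold soleExceedProb
  exact (continuousOn_const.mul (continuousOn_const.div continuousOn_id hne)).mul
    ((continuousOn_const.sub (continuousOn_const.div continuousOn_id hne)).pow m)

lemma ae_mem_Icc_of_iso (hr0 : 0 < r) (hr1 : r < 1)
    (hν : ∀ x, ν (Iic x) = ENNReal.ofReal (isoCDF r x)) :
    ∀ᵐ x ∂ν, x ∈ Icc (0 : ℝ) 1 := by
  refine (ae_mem_Ioc_of_measure_Iic ?_ ?_).mono fun _ hx => Ioc_subset_Icc_self hx
  · rw [hν, isoCDF, if_pos hr0, ENNReal.ofReal_zero]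
  · rw [hν, isoCDF, if_neg (not_lt.2 hr1.le), if_neg (lt_irrefl 1), ENNReal.ofReal_one]

lemma pi_iso_real_top2_le_and_lt_top1 (hr0 : 0 < r)
    (hν : ∀ x, ν (Iic x) = ENNReal.ofReal (isoCDF r x)) {s : ℝ} (hs : s ∈ Ioo r 1) :
    (Measure.pi fun _ : Fin (m + 1) => ν).real {v | top2 v ≤ s ∧ s < top1 v}
      = soleExceedProb m r s := by
  have hs0 : 0 < s := hr0.trans hs.1
  have hrs : r / s ≤ 1 := div_le_one_of_le₀ hs.1.le hs0.le
  have hIic : ν (Iic s) = ENNReal.ofReal (1 - r / s) := by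
    rw [hν, isoCDF, if_neg (not_lt.2 hs.1.le), if_pos hs.2]
  have hIoi : ν (Ioi s) = ENNReal.ofReal (r / s) := by
    rw [← compl_Iic, prob_compl_eq_one_sub measurableSet_Iic, hIic, ← ENNReal.ofReal_one,
      ← ENNReal.ofReal_sub _ (sub_nonneg.2 hrs)]
    ring_nf
  rw [measureReal_def, pi_top2_le_and_lt_top1 hs0.le, hIic, hIoi, soleExceedProb]
  simp [ENNReal.toReal_ofReal (div_nonneg hr0.le hs0.le), ENNReal.toReal_ofReal (sub_nonneg.2 hrs),
    ENNReal.toReal_add]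
  ring

variable {μ : Measure ℝ}

lemma integrable_top1_mul_one_sub_cdf {G : Measure (Fin (m + 1) → ℝ)} [IsFiniteMeasure G]
    (hG : ∀ᵐ v ∂G, v ∈ Icc 0 1) :
    Integrable (fun v => top1 v * (1 - cdf μ (top1 v))) G := by
  refine Integrable.of_bound (measurable_top1.mul (measurable_const.sub
    ((cdf μ).mono.measurable.comp measurable_top1))).aestronglyMeasurable 1
    (hG.mono fun v hv => ?_)
  have h0 : 0 ≤ top1 v := (hv.1 0).trans (le_top1 v 0)
  have h1 : top1 v ≤ 1 := top1_le_iff.2 hv.2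
  have := cdf_nonneg μ (top1 v)
  have := cdf_le_one μ (top1 v)
  rw [Real.norm_of_nonneg (mul_nonneg h0 (by linarith))]
  nlinarith

lemma integral_top1_mul_one_sub_cdf_pi_iso (hr0 : 0 < r) (hr1 : r < 1)
    (hν : ∀ x, ν (Iic x) = ENNReal.ofReal (isoCDF r x)) (hμ1 : cdf μ 1 = 1) :
    ∫ v, top1 v * (1 - cdf μ (top1 v)) ∂(Measure.pi fun _ : Fin (m + 1) => ν)
      = ∫ s in Ioc r 1, soleExceedProb m r s * (1 - cdf μ s) := by
  rw [integral_comp_top1_pi_iso (h := fun x => x * (1 - cdf μ x)) hr0 hr1 hν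
    (measurable_id.mul (measurable_const.sub (cdf μ).mono.measurable))
    (integrable_top1_mul_one_sub_cdf (ae_pi_mem_Icc (ae_mem_Icc_of_iso hr0 hr1 hν))), hμ1,
    sub_self, mul_zero, mul_zero, add_zero]
  refine setIntegral_congr_fun measurableSet_Ioc fun s hs => ?_
  have : s ≠ 0 := (hr0.trans hs.1).ne'
  simp only [isoMaxDensity, soleExceedProb]
  field_simp

lemma Ico_top2_top1_subset_Icc {v : Fin (m + 1) → ℝ} (hv : v ∈ Icc 0 1) :
    Ico (top2 v) (top1 v) ⊆ Icc 0 1 :=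
  Ico_subset_Icc_self.trans (Icc_subset_Icc (top2_nonneg v) (top1_le_iff.2 hv.2))

lemma integral_setIntegral_Ico_cdf_pi_iso (hr0 : 0 < r) (hr1 : r < 1)
    (hν : ∀ x, ν (Iic x) = ENNReal.ofReal (isoCDF r x)) (hμr : cdf μ r = 0) :
    ∫ v, (∫ t in Ico (top2 v) (top1 v), cdf μ t) ∂(Measure.pi fun _ : Fin (m + 1) => ν)
      = ∫ s in Ioo r 1, cdf μ s * soleExceedProb m r s := by
  have hG := ae_pi_mem_Icc (ι := Fin (m + 1)) (ae_mem_Icc_of_iso hr0 hr1 hν)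
  rw [integral_setIntegral_Ico_of_subset measurable_top1 measurable_top2 measurableSet_Icc
    ((cdf μ).mono.locallyIntegrable.integrableOn_isCompact isCompact_Icc)
    (hG.mono fun _ hv => Ico_top2_top1_subset_Icc hv),
    setIntegral_eq_of_subset_of_forall_sdiff_eq_zero measurableSet_Icc
      (Ioo_subset_Icc_self.trans (Icc_subset_Icc_left hr0.le))]
  · exact setIntegral_congr_fun measurableSet_Ioo fun s hs => by
      rw [pi_iso_real_top2_le_and_lt_top1 hr0 hν hs]
  rintro s ⟨hs, hsn⟩
  rcases le_or_gt s r with hsr | hsr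
  · rw [le_antisymm (((cdf μ).mono hsr).trans hμr.le) (cdf_nonneg μ s), zero_mul]
  · obtain rfl : s = 1 := le_antisymm hs.2 (not_lt.1 fun h => hsn ⟨hsr, h⟩)
    have hnull : Measure.pi (fun _ : Fin (m + 1) => ν) {v | top2 v ≤ 1 ∧ 1 < top1 v} = 0 :=
      measure_mono_null (fun v hv (hvI : v ∈ Icc 0 1) =>
        (top1_le_iff.2 fun i => hvI.2 i : top1 v ≤ 1).not_gt hv.2) (ae_iff.1 hG)
    rw [measureReal_def, hnull, ENNReal.toReal_zero, mul_zero]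

theorem spaRegret_pi_iso (hr0 : 0 < r) (hr1 : r < 1)
    (hν : ∀ x, ν (Iic x) = ENNReal.ofReal (isoCDF r x)) [IsProbabilityMeasure μ]
    (hμr : μ (Iic r) = 0) (hμ1 : μ (Iic 1) = 1) :
    spaRegret (m + 1) μ (Measure.pi fun _ => ν) = ∫ s in r..1, soleExceedProb m r s := by
  have hG := ae_pi_mem_Icc (ι := Fin (m + 1)) (ae_mem_Icc_of_iso hr0 hr1 hν)
  have hμ : ∀ᵐ p ∂μ, p ∈ Icc (0 : ℝ) 1 :=
    (ae_mem_Ioc_of_measure_Iic hμr hμ1).mono fun p hp => ⟨hr0.le.trans hp.1.le, hp.2⟩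
  have hcdf : ∀ a b, IntegrableOn (cdf μ) (Icc a b) := fun _ _ =>
    (cdf μ).mono.locallyIntegrable.integrableOn_isCompact isCompact_Icc
  have hq : ContinuousOn (soleExceedProb m r) (Icc r 1) :=
    (continuousOn_soleExceedProb hr0).mono Icc_subset_Ici_self
  simp only [spaRegret_eq_integral hμ hG, ← cdf_eq_real]
  rw [integral_add (integrable_top1_mul_one_sub_cdf hG)
      (integrable_setIntegral_Ico_of_subset measurable_top1 measurable_top2 measurableSet_Icc
        (hcdf 0 1) (hG.mono fun _ hv => Ico_top2_top1_subset_Icc hv)),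
    integral_top1_mul_one_sub_cdf_pi_iso hr0 hr1 hν (by simp [cdf_eq_real, measureReal_def, hμ1]),
    integral_setIntegral_Ico_cdf_pi_iso hr0 hr1 hν (by simp [cdf_eq_real, measureReal_def, hμr]),
    integral_Ioc_eq_integral_Ioo, ← integral_add, intervalIntegral.integral_of_le hr1.le,
    integral_Ioc_eq_integral_Ioo]
  · exact setIntegral_congr_fun measurableSet_Ioo fun s _ => by ring
  · exact (IntegrableOn.mono_set ((integrable_const 1).sub (hcdf r 1))
      Ioo_subset_Icc_self).continuousOn_mul_of_subset hq isCompact_Icc measurableSet_Ioo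
      Ioo_subset_Icc_self
  · exact ((hcdf r 1).mono_set Ioo_subset_Icc_self).mul_continuousOn_of_subset hq measurableSet_Ioo
      isCompact_Icc Ioo_subset_Icc_self

end IsorevenueRegret

section CriticalReserve

variable {m : ℕ} {r : ℝ}

lemma log_add_sum_eq_of_gfun_eq_zero (hz : gfun (m + 1) r = 0) :
    Real.log r + ∑ k ∈ Finset.Icc 1 m, (1 - r) ^ k / k = -(1 - r) ^ m := by
  simp only [gfun, add_tsub_cancel_right] at hz
  linarith

lemma Phi_one (hr1 : r < 1) (hz : gfun (m + 1) r = 0) : Phi (m + 1) r 1 = 1 := by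
  have h1r : (1 - r) ^ m ≠ 0 := pow_ne_zero m (by linarith)
  have hsum : ∀ k ∈ Finset.Icc 1 m,
      (1 - r) ^ m * (1 / (k : ℝ) * (1 / (1 - r)) ^ (m - k)) = (1 - r) ^ k / k := by
    intro k hk
    have : (1 : ℝ) - r ≠ 0 := by linarith
    rw [← pow_sub_mul_pow (1 - r) (Finset.mem_Icc.1 hk).2, one_div_pow]
    field_simp
  have hlog : (1 - r) ^ m * ((1 / (1 - r)) ^ m * Real.log (1 / r)) = -Real.log r := by
    rw [one_div, one_div, inv_pow, Real.log_inv, ← mul_assoc, mul_inv_cancel₀ h1r, one_mul]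
  refine mul_left_cancel₀ h1r ?_
  rw [Phi, if_neg (not_le.2 hr1), add_tsub_cancel_right, mul_sub,
    Finset.mul_sum, Finset.sum_congr rfl hsum, hlog, mul_one]
  linarith [log_add_sum_eq_of_gfun_eq_zero hz]

lemma hasDerivAt_sum_pow_div (m : ℕ) (x : ℝ) :
    HasDerivAt (fun y : ℝ => ∑ k ∈ Finset.Icc 1 m, y ^ k / (k : ℝ))
      (∑ j ∈ Finset.range m, x ^ j) x := by
  induction m with
  | zero => simpa using hasDerivAt_const x (0 : ℝ)
  | succ m ih =>
    simp only [Finset.sum_Icc_succ_top (Nat.le_add_left 1 m), Finset.sum_range_succ]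
    refine ih.add (((hasDerivAt_pow (m + 1) x).div_const ((m + 1 : ℕ) : ℝ)).congr_deriv ?_)
    field_simp
    simp

lemma hasDerivAt_soleExceedProb_primitive {s : ℝ} (hs : s ≠ 0) :
    HasDerivAt (fun t => t * (1 - r / t) ^ (m + 1) + r * Real.log t
      - r * ∑ k ∈ Finset.Icc 1 m, (1 - r / t) ^ k / (k : ℝ))
      (soleExceedProb m r s + (1 - r / s) ^ m) s := by
  have h1 := hasDerivAt_one_sub_div r hs
  have hA := (hasDerivAt_id s).mul (h1.pow (m + 1))
  have hB := (Real.hasDerivAt_log hs).const_mul r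
  have hC := ((hasDerivAt_sum_pow_div m (1 - r / s)).comp s h1).const_mul r
  refine ((hA.add hB).sub hC).congr_deriv ?_
  have hgeom : (∑ j ∈ Finset.range m, (1 - r / s) ^ j) * (r / s) = 1 - (1 - r / s) ^ m := by
    rw [← geom_sum_mul_neg]
    ring
  have hs2 : s * (r / s ^ 2) = r / s := by
    field_simp
  simp only [soleExceedProb, Pi.pow_apply, id, one_mul, add_tsub_cancel_right, Nat.cast_add,
    Nat.cast_one]
  linear_combination (-(r / s)) * hgeom + ((m + 1) * (1 - r / s) ^ m) * hs2

lemma integral_soleExceedProb (hr0 : 0 < r) (hr1 : r < 1) (hz : gfun (m + 1) r = 0) :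
    ∫ s in r..1, soleExceedProb m r s = (1 - r) ^ m - ∫ s in r..1, (1 - r / s) ^ m := by
  have hIcc : uIcc r 1 ⊆ Ici r := by
    rw [uIcc_of_le hr1.le]
    exact Icc_subset_Ici_self
  have hne : ∀ s ∈ uIcc r 1, s ≠ 0 := fun s hs => (hr0.trans_le (hIcc hs)).ne'
  have hq := (continuousOn_soleExceedProb (m := m) hr0).mono hIcc
  have hp : ContinuousOn (fun s => (1 - r / s) ^ m) (uIcc r 1) :=
    (continuousOn_const.sub (continuousOn_const.div continuousOn_id hne)).pow m
  have hFTC := intervalIntegral.integral_eq_sub_of_hasDerivAt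
    (fun s hs => hasDerivAt_soleExceedProb_primitive (hne s hs)) (hq.add hp).intervalIntegrable
  have hsum0 : ∑ k ∈ Finset.Icc 1 m, (0 : ℝ) ^ k / k = 0 :=
    Finset.sum_eq_zero fun k hk => by rw [zero_pow (by grind), zero_div]
  rw [intervalIntegral.integral_add hq.intervalIntegrable hp.intervalIntegrable, div_self hr0.ne',
    sub_self, hsum0, zero_pow (Nat.succ_ne_zero m), div_one, Real.log_one] at hFTC
  linear_combination hFTC - r * log_add_sum_eq_of_gfun_eq_zero hz

end CriticalReserve

/-- the regret of the SPA with random reserve `μₙ*` against the `n`-fold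
i.i.d. product of the isorevenue distribution with parameter `rₙ*` equals exactly
`(1 - rₙ*)^(n-1) - ∫_{rₙ*}^1 (1 - rₙ*/v)^(n-1) dv`. -/
theorem stmt1 (n : ℕ) (hn : 1 ≤ n) (rs : ℝ) (hrs : rs ∈ Set.Ioo (0:ℝ) 1)
    (hzero : gfun n rs = 0)
    (μ : Measure ℝ) [IsProbabilityMeasure μ]
    (hμ : ∀ v : ℝ, μ (Set.Iic v) = ENNReal.ofReal (PhiExt n rs v))
    (ν : Measure ℝ) [IsProbabilityMeasure ν]
    (hν : ∀ v : ℝ, ν (Set.Iic v) = ENNReal.ofReal (isoCDF rs v)) :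
    spaRegret n μ (Measure.pi fun _ : Fin n => ν)
      = (1 - rs) ^ (n - 1) - ∫ v in rs..1, (1 - rs / v) ^ (n - 1) := by
  obtain ⟨m, rfl⟩ : ∃ m, n = m + 1 := ⟨n - 1, by omega⟩
  obtain ⟨hr0, hr1⟩ := hrs
  have hμr : μ (Iic rs) = 0 := by
    rw [hμ, PhiExt, if_pos hr1.le, Phi, if_pos le_rfl, ENNReal.ofReal_zero]
  have hμ1 : μ (Iic 1) = 1 := by
    rw [hμ, PhiExt, if_pos le_rfl, Phi_one hr1 hzero, ENNReal.ofReal_one]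
  rw [spaRegret_pi_iso hr0 hr1 hν hμr hμ1, integral_soleExceedProb hr0 hr1 hzero,
    add_tsub_cancel_right]

end
end

section
/- For every integer n ≥ 1, the function g_n(r) = (1−r)^{n−1} + log r + Σ_{k=1}^{n−1} (1−r)^k/k has exactly one zero in the open interval (0,1), and this zero lies in (0, 1/n). Moreover, for n ≥ 2, g_n is strictly increasing on (0, 1/n), strictly decreasing on (1/n, 1), g_n(r) → −∞ as r ↓ 0, and g_n(r) → 0 as r ↑ 1. -/
open MeasureTheory Real Set ENNReal

noncomputable section

/-! For `n ≥ 2` the derivative of `gfun n` is `(1 - r) ^ (n - 2) * (1 - n r) / r`: the derivative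
`-∑_{k < n-1} (1 - r) ^ k` of the sum is a geometric sum and cancels the `1 / r` coming from the
logarithm. So `gfun n` increases on `(0, 1/n]` and decreases on `[1/n, 1]` down to `gfun n 1 = 0`;
it is therefore positive on `[1/n, 1)`, and since it tends to `-∞` at `0` it has exactly one zero,
which lies in `(0, 1/n)`. For `n = 1`, `gfun 1 = 1 + log` vanishes only at `1 / e`. -/

open Filter Topology

lemma gfun_add_two (m : ℕ) : gfun (m + 2) = fun r =>
    (1 - r) ^ (m + 1) + Real.log r + ∑ k ∈ Finset.range (m + 1), (1 - r) ^ (k + 1) / (k + 1) := by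
  ext r
  rw [gfun, show m + 2 - 1 = m + 1 by omega, ← Finset.Ico_add_one_right_eq_Icc,
    Finset.sum_Ico_eq_sum_range]
  simp only [add_tsub_cancel_right, add_comm 1, Nat.cast_add_one]

lemma hasDerivAt_gfun {n : ℕ} (hn : 2 ≤ n) {r : ℝ} (hr : r ≠ 0) :
    HasDerivAt (gfun n) ((1 - r) ^ (n - 2) * (1 - n * r) / r) r := by
  obtain ⟨m, rfl⟩ := Nat.exists_eq_add_of_le' hn
  have hpow : HasDerivAt (fun r : ℝ => (1 - r) ^ (m + 1)) (-((m + 1) * (1 - r) ^ m)) r := by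
    simpa using ((hasDerivAt_id r).const_sub 1).fun_pow (m + 1)
  have hsum : HasDerivAt (fun r : ℝ => ∑ k ∈ Finset.range (m + 1), (1 - r) ^ (k + 1) / (k + 1))
      (∑ k ∈ Finset.range (m + 1), -(1 - r) ^ k) r := by
    refine HasDerivAt.fun_sum fun k _ => ?_
    refine ((((hasDerivAt_id r).const_sub 1).fun_pow (k + 1)).div_const
      ((k : ℝ) + 1)).congr_deriv ?_
    simp only [id, add_tsub_cancel_right, Nat.cast_add_one]
    field_simp
  have hgeom := geom_sum_mul (1 - r) (m + 1)
  rw [gfun_add_two]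
  refine ((hpow.add (Real.hasDerivAt_log hr)).add hsum).congr_deriv ?_
  rw [Finset.sum_neg_distrib]
  field_simp
  push_cast
  linear_combination hgeom

lemma gfun_one_eq (r : ℝ) : gfun 1 r = 1 + Real.log r := by
  simp [gfun]

lemma gfun_apply_one {n : ℕ} (hn : 2 ≤ n) : gfun n 1 = 0 := by
  obtain ⟨m, rfl⟩ := Nat.exists_eq_add_of_le' hn
  simp [gfun_add_two]

lemma continuousOn_gfun (n : ℕ) : ContinuousOn (gfun n) {0}ᶜ := by
  unfold gfun
  fun_prop (disch := assumption)

lemma strictMonoOn_gfun {n : ℕ} (hn : 1 ≤ n) : StrictMonoOn (gfun n) (Ioc 0 (1 / (n : ℝ))) := by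
  obtain rfl | hn := hn.eq_or_lt
  · intro a ha b _ hab
    simpa [gfun_one_eq] using log_lt_log ha.1 hab
  refine strictMonoOn_of_deriv_pos (convex_Ioc _ _)
    ((continuousOn_gfun n).mono fun x hx => hx.1.ne') fun x hx => ?_
  rw [interior_Ioc] at hx
  have hnx : n * x < 1 := by
    rw [mul_comm, ← lt_div_iff₀ (by positivity)]
    exact hx.2
  have hx1 : x < 1 := by
    nlinarith [show (2 : ℝ) ≤ n by exact_mod_cast hn, hx.1]
  rw [(hasDerivAt_gfun hn hx.1.ne').deriv]
  exact div_pos (mul_pos (pow_pos (by linarith) _) (by linarith)) hx.1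

lemma strictAntiOn_gfun {n : ℕ} (hn : 2 ≤ n) : StrictAntiOn (gfun n) (Icc (1 / (n : ℝ)) 1) := by
  have hn0 : (0 : ℝ) < 1 / n := by positivity
  refine strictAntiOn_of_deriv_neg (convex_Icc _ _)
    ((continuousOn_gfun n).mono fun x hx => (hn0.trans_le hx.1).ne') fun x hx => ?_
  rw [interior_Icc] at hx
  have hnx : 1 < n * x := by
    rw [mul_comm, ← div_lt_iff₀ (by positivity)]
    exact hx.1
  rw [(hasDerivAt_gfun hn (hn0.trans hx.1).ne').deriv]
  exact div_neg_of_neg_of_pos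
    (mul_neg_of_pos_of_neg (pow_pos (by linarith [hx.2]) _) (by linarith)) (hn0.trans hx.1)

lemma tendsto_gfun_atBot (n : ℕ) : Tendsto (gfun n) (𝓝[>] 0) atBot := by
  have hcont : Continuous fun r : ℝ =>
      (1 - r) ^ (n - 1) + ∑ k ∈ Finset.Icc 1 (n - 1), (1 - r) ^ k / (k : ℝ) := by
    fun_prop
  refine ((hcont.tendsto 0).mono_left nhdsWithin_le_nhds).add_atBot tendsto_log_nhdsGT_zero
    |>.congr fun r => ?_
  simp only [gfun]
  ring

lemma tendsto_gfun_one {n : ℕ} (hn : 2 ≤ n) : Tendsto (gfun n) (𝓝[<] 1) (𝓝 0) := by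
  have hcont : ContinuousAt (gfun n) 1 :=
    (continuousOn_gfun n).continuousAt (compl_singleton_mem_nhds one_ne_zero)
  simpa [gfun_apply_one hn] using hcont.tendsto.mono_left nhdsWithin_le_nhds

lemma gfun_pos_of_mem_Ico {n : ℕ} (hn : 2 ≤ n) {r : ℝ} (hr : r ∈ Ico (1 / (n : ℝ)) 1) :
    0 < gfun n r := by
  have h1n : (1 : ℝ) / n ≤ 1 := hr.1.trans hr.2.le
  simpa [gfun_apply_one hn] using
    strictAntiOn_gfun hn (Ico_subset_Icc_self hr) ⟨h1n, le_rfl⟩ hr.2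

lemma gfun_one_div_pos {n : ℕ} (hn : 1 ≤ n) : 0 < gfun n (1 / n) := by
  obtain rfl | hn := hn.eq_or_lt
  · simp [gfun_one_eq]
  refine gfun_pos_of_mem_Ico hn ⟨le_rfl, ?_⟩
  rw [div_lt_one (by positivity)]
  exact_mod_cast hn

lemma mem_Ioo_of_gfun_eq_zero {n : ℕ} (hn : 1 ≤ n) {r : ℝ} (hr : r ∈ Ioo (0 : ℝ) 1)
    (h : gfun n r = 0) : r ∈ Ioo 0 (1 / (n : ℝ)) := by
  obtain rfl | hn := hn.eq_or_lt
  · simpa using hr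
  refine ⟨hr.1, lt_of_not_ge fun hge => ?_⟩
  exact (gfun_pos_of_mem_Ico hn ⟨hge, hr.2⟩).ne' h

lemma exists_gfun_eq_zero {n : ℕ} (hn : 1 ≤ n) : ∃ r ∈ Ioo 0 (1 / (n : ℝ)), gfun n r = 0 := by
  have hn0 : (0 : ℝ) < 1 / n := by positivity
  have hnear : ∀ᶠ r in 𝓝[>] 0, r ∈ Ioo 0 (1 / (n : ℝ)) := Ioo_mem_nhdsGT hn0
  obtain ⟨a, ha, hga⟩ : ∃ a ∈ Ioo 0 (1 / (n : ℝ)), gfun n a < 0 :=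
    (hnear.and ((tendsto_gfun_atBot n).eventually (eventually_lt_atBot 0))).exists
  obtain ⟨c, hc, hgc⟩ := intermediate_value_Ioo ha.2.le
    ((continuousOn_gfun n).mono fun x hx => (ha.1.trans_le hx.1).ne')
    ⟨hga, gfun_one_div_pos hn⟩
  exact ⟨c, ⟨ha.1.trans hc.1, hc.2⟩, hgc⟩

/-- `gₙ` has exactly one zero in `(0,1)`, lying in `(0, 1/n)`; for `n ≥ 2`,
`gₙ` is strictly increasing on `(0, 1/n)`, strictly decreasing on `(1/n, 1)`,
tends to `-∞` as `r ↓ 0` and tends to `0` as `r ↑ 1`. -/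
theorem stmt3 (n : ℕ) (hn : 1 ≤ n) :
    (∃! r : ℝ, r ∈ Set.Ioo (0:ℝ) 1 ∧ gfun n r = 0) ∧
    (∀ r ∈ Set.Ioo (0:ℝ) 1, gfun n r = 0 → r ∈ Set.Ioo (0:ℝ) (1 / n)) ∧
    (2 ≤ n →
      StrictMonoOn (gfun n) (Set.Ioo (0:ℝ) (1 / n)) ∧
      StrictAntiOn (gfun n) (Set.Ioo ((1:ℝ) / n) 1) ∧
      Filter.Tendsto (gfun n) (nhdsWithin 0 (Set.Ioi 0)) Filter.atBot ∧
      Filter.Tendsto (gfun n) (nhdsWithin 1 (Set.Iio 1)) (nhds 0)) := by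
  obtain ⟨c, hc, hgc⟩ := exists_gfun_eq_zero hn
  have h1n : (1 : ℝ) / n ≤ 1 := div_le_one_of_le₀ (by exact_mod_cast hn) (Nat.cast_nonneg n)
  refine ⟨⟨c, ⟨⟨hc.1, hc.2.trans_le h1n⟩, hgc⟩, fun r ⟨hr, hgr⟩ => ?_⟩,
    fun r hr h => mem_Ioo_of_gfun_eq_zero hn hr h, fun h2 => ⟨?_, ?_, tendsto_gfun_atBot n,
      tendsto_gfun_one h2⟩⟩
  · exact (strictMonoOn_gfun hn).injOn (Ioo_subset_Ioc_self (mem_Ioo_of_gfun_eq_zero hn hr hgr))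
      (Ioo_subset_Ioc_self hc) (hgr.trans hgc.symm)
  · exact (strictMonoOn_gfun hn).mono Ioo_subset_Ioc_self
  · exact (strictAntiOn_gfun h2).mono Ioo_subset_Icc_self

end
end

section
/- For every integer n ≥ 1, the function Φ_n^* is differentiable at every v ∈ (r_n^*, 1) and satisfies the linear ordinary differential equation (Φ_n^*)'(v) + ((n−1) r_n^* / (v (v − r_n^*))) · Φ_n^*(v) = 1/v for all v ∈ (r_n^*, 1); moreover Φ_n^*(v) → 0 as v ↓ r_n^* and Φ_n^*(1) = 1. -/
open MeasureTheory Real Set ENNReal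

noncomputable section

/-!
With `x = 1 - rₙ*/v ∈ (0, 1)` one has `v/(v - rₙ*) = 1/x` and `log (v/rₙ*) = -log (1 - x)`, so
`Φₙ*(v) = T(x) / xⁿ⁻¹`, where `T(x) = -log (1 - x) - ∑_{1 ≤ k < n} xᵏ/k` is the tail of the logarithmic
series. Since `T'(x) = xⁿ⁻¹/(1 - x)`, the ODE is the chain rule for `v ↦ x`; the bound
`|T(x)| ≤ |x|ⁿ/(1 - |x|)` gives `|Φₙ*(v)| ≤ (v - rₙ*)/rₙ*`, hence the limit; and at `v = 1`,
`gₙ(rₙ*) = 0` says precisely that `T(1 - rₙ*) = (1 - rₙ*)ⁿ⁻¹`.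
-/

open Filter Topology

lemma Finset.sum_Icc_one_eq_sum_range {M : Type*} [AddCommMonoid M] (f : ℕ → M) (m : ℕ) :
    ∑ k ∈ Finset.Icc 1 m, f k = ∑ i ∈ Finset.range m, f (i + 1) := by
  rw [← Finset.Ico_add_one_right_eq_Icc, Finset.sum_Ico_eq_sum_range]
  simp [add_comm]

def logSeriesTail (m : ℕ) (x : ℝ) : ℝ :=
  -Real.log (1 - x) - ∑ i ∈ Finset.range m, x ^ (i + 1) / (i + 1)

lemma hasDerivAt_logSeriesTail (m : ℕ) {x : ℝ} (hx : x ≠ 1) :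
    HasDerivAt (logSeriesTail m) (x ^ m / (1 - x)) x := by
  have h1x : 1 - x ≠ 0 := sub_ne_zero.2 hx.symm
  have hlog : HasDerivAt (fun y => -Real.log (1 - y)) (1 / (1 - x)) x :=
    (((hasDerivAt_id x).const_sub 1).log h1x).neg.congr_deriv (by simp [neg_div])
  have hsum : HasDerivAt (fun y => ∑ i ∈ Finset.range m, y ^ (i + 1) / ((i : ℝ) + 1))
      (∑ i ∈ Finset.range m, x ^ i) x := by
    refine HasDerivAt.fun_sum fun i _ => ?_
    refine ((hasDerivAt_pow (i + 1) x).div_const ((i : ℝ) + 1)).congr_deriv ?_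
    push_cast
    field_simp
  refine (hlog.sub hsum).congr_deriv ?_
  rw [geom_sum_eq hx]
  field_simp
  ring

lemma abs_logSeriesTail_le (m : ℕ) {x : ℝ} (hx : |x| < 1) :
    |logSeriesTail m x| ≤ |x| ^ (m + 1) / (1 - |x|) := by
  rw [logSeriesTail, ← abs_neg]
  convert Real.abs_log_sub_add_sum_range_le hx m using 2
  ring

lemma hasDerivAt_logSeriesTail_div_pow (m : ℕ) {x : ℝ} (hx₀ : x ≠ 0) (hx₁ : x ≠ 1) :
    HasDerivAt (fun y => logSeriesTail m y / y ^ m)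
      (1 / (1 - x) - m / x * (logSeriesTail m x / x ^ m)) x := by
  refine ((hasDerivAt_logSeriesTail m hx₁).div (hasDerivAt_pow m x)
    (pow_ne_zero m hx₀)).congr_deriv ?_
  have hpow : (m : ℝ) * x ^ (m - 1) * x = m * x ^ m := by
    rcases eq_or_ne m 0 with rfl | hm
    · simp
    · rw [mul_assoc, pow_sub_one_mul hm]
  have h1x : 1 - x ≠ 0 := sub_ne_zero.2 hx₁.symm
  field_simp
  linear_combination (-(1 - x) * logSeriesTail m x) * hpow

lemma abs_logSeriesTail_div_pow_le (m : ℕ) {x : ℝ} (hx₀ : x ≠ 0) (hx₁ : |x| < 1) :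
    |logSeriesTail m x / x ^ m| ≤ |x| / (1 - |x|) := by
  have hpos : 0 < |x| ^ m := pow_pos (abs_pos.2 hx₀) m
  rw [abs_div, abs_pow, div_le_iff₀ hpos]
  calc |logSeriesTail m x| ≤ |x| ^ (m + 1) / (1 - |x|) := abs_logSeriesTail_le m hx₁
    _ = |x| / (1 - |x|) * |x| ^ m := by ring

lemma one_sub_div_mem_Ioo {r v : ℝ} (hr : 0 < r) (hv : r < v) : 1 - r / v ∈ Set.Ioo 0 1 := by
  have hv₀ : 0 < v := hr.trans hv
  constructor
  · rw [sub_pos, div_lt_one hv₀]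
    exact hv
  · rw [sub_lt_self_iff]
    positivity

lemma Phi_eq_logSeriesTail_div_pow (n : ℕ) {rs v : ℝ} (hrs : 0 < rs) (hv : rs < v) :
    Phi n rs v = logSeriesTail (n - 1) (1 - rs / v) / (1 - rs / v) ^ (n - 1) := by
  have hx₀ := (one_sub_div_mem_Ioo hrs hv).1.ne'
  set x := 1 - rs / v with hx
  have hu : v / (v - rs) = x⁻¹ := by
    have hv₀ : v ≠ 0 := (hrs.trans hv).ne'
    rw [hx]
    field_simp
  have hlog : Real.log (v / rs) = -Real.log (1 - x) := by
    rw [hx, _root_.sub_sub_cancel, ← Real.log_inv, inv_div]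
  rw [Phi, if_neg hv.not_ge, hu, hlog, Finset.sum_Icc_one_eq_sum_range, logSeriesTail,
    div_eq_mul_inv, ← inv_pow, sub_mul, Finset.sum_mul]
  congr 1
  · ring
  refine Finset.sum_congr rfl fun i hi => ?_
  rw [pow_sub₀ _ (inv_ne_zero hx₀) (show i + 1 ≤ n - 1 from Finset.mem_range.1 hi)]
  simp only [inv_pow, inv_inv]
  push_cast
  ring

lemma hasDerivAt_Phi (n : ℕ) {rs v : ℝ} (hrs : 0 < rs) (hv : rs < v) :
    HasDerivAt (Phi n rs) (1 / v - (n - 1 : ℕ) * rs / (v * (v - rs)) * Phi n rs v) v := by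
  have hv₀ : 0 < v := hrs.trans hv
  obtain ⟨hx₀, hx₁⟩ := one_sub_div_mem_Ioo hrs hv
  have hh : HasDerivAt (fun w => 1 - rs / w) (rs / v ^ 2) v :=
    ((((hasDerivAt_id' v).inv hv₀.ne').const_mul rs).const_sub 1).congr_deriv (by ring)
  have hcomp := (hasDerivAt_logSeriesTail_div_pow (n - 1) hx₀.ne' hx₁.ne).comp v hh
  rw [← Phi_eq_logSeriesTail_div_pow n hrs hv] at hcomp
  refine (hcomp.congr_of_eventuallyEq ?_).congr_deriv ?_
  · filter_upwards [Ioi_mem_nhds hv] with w hw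
    exact Phi_eq_logSeriesTail_div_pow n hrs hw
  · have hvr : v - rs ≠ 0 := sub_ne_zero.2 hv.ne'
    have hrs' : rs ≠ 0 := hrs.ne'
    rw [_root_.sub_sub_cancel, one_sub_div hv₀.ne']
    field_simp

lemma abs_Phi_le (n : ℕ) {rs v : ℝ} (hrs : 0 < rs) (hv : rs < v) :
    |Phi n rs v| ≤ (v - rs) / rs := by
  have hv₀ : 0 < v := hrs.trans hv
  obtain ⟨hx₀, hx₁⟩ := one_sub_div_mem_Ioo hrs hv
  rw [Phi_eq_logSeriesTail_div_pow n hrs hv]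
  convert abs_logSeriesTail_div_pow_le (n - 1) hx₀.ne' ((abs_of_pos hx₀).symm ▸ hx₁) using 1
  rw [abs_of_pos hx₀, _root_.sub_sub_cancel]
  have hrs' : rs ≠ 0 := hrs.ne'
  field_simp

lemma tendsto_Phi_nhdsGT (n : ℕ) {rs : ℝ} (hrs : 0 < rs) :
    Tendsto (Phi n rs) (𝓝[>] rs) (𝓝 0) := by
  have hbound : Tendsto (fun v => (v - rs) / rs) (𝓝[>] rs) (𝓝 0) := by
    have := ((continuous_sub_right rs).div_const rs).tendsto rs
    simpa using this.mono_left nhdsWithin_le_nhds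
  exact squeeze_zero_norm' (eventually_nhdsWithin_of_forall fun v hv => abs_Phi_le n hrs hv)
    hbound

lemma logSeriesTail_one_sub_of_gfun_eq_zero (n : ℕ) {r : ℝ} (h : gfun n r = 0) :
    logSeriesTail (n - 1) (1 - r) = (1 - r) ^ (n - 1) := by
  rw [gfun, Finset.sum_Icc_one_eq_sum_range] at h
  rw [logSeriesTail, _root_.sub_sub_cancel]
  push_cast at h
  linarith

lemma Phi_one_eq_one (n : ℕ) {rs : ℝ} (h₀ : 0 < rs) (h₁ : rs < 1) (hg : gfun n rs = 0) :
    Phi n rs 1 = 1 := by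
  rw [Phi_eq_logSeriesTail_div_pow n h₀ h₁, div_one, logSeriesTail_one_sub_of_gfun_eq_zero n hg,
    div_self (pow_ne_zero _ (sub_ne_zero.2 h₁.ne'))]

/-- `Φₙ*` is differentiable on `(rₙ*, 1)` and satisfies there the ODE
`(Φₙ*)'(v) + ((n-1) rₙ* / (v (v - rₙ*))) Φₙ*(v) = 1/v`; moreover `Φₙ*(v) → 0` as
`v ↓ rₙ*` and `Φₙ*(1) = 1`. -/
theorem stmt4 (n : ℕ) (hn : 1 ≤ n) (rs : ℝ) (hrs : rs ∈ Set.Ioo (0:ℝ) 1)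
    (hzero : gfun n rs = 0) :
    (∀ v ∈ Set.Ioo rs (1:ℝ), ∃ d : ℝ, HasDerivAt (Phi n rs) d v ∧
      d + ((n:ℝ) - 1) * rs / (v * (v - rs)) * Phi n rs v = 1 / v) ∧
    Filter.Tendsto (Phi n rs) (nhdsWithin rs (Set.Ioi rs)) (nhds 0) ∧
    Phi n rs 1 = 1 := by
  obtain ⟨hrs₀, hrs₁⟩ := hrs
  refine ⟨fun v hv => ⟨_, hasDerivAt_Phi n hrs₀ hv.1, ?_⟩, tendsto_Phi_nhdsGT n hrs₀,
    Phi_one_eq_one n hrs₀ hrs₁ hzero⟩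
  rw [Nat.cast_sub hn, Nat.cast_one]
  ring

end
end

section
/- Let n ≥ 2 be an integer and let u_0, u_1, …, u_n be nonnegative real numbers satisfying u_0·u_{k+1} ≥ u_1·u_k for every 0 ≤ k ≤ n−1. Then u_0^{n−1} · ( u_0 + Σ_{k=1}^{n} C(n,k)·u_k ) ≥ (u_0 + u_1)^n, where C(n,k) denotes the binomial coefficient. In particular, if additionally u_0 + Σ_{k=1}^{n} C(n,k)·u_k = 1, then u_0^{n−1} ≥ (u_0 + u_1)^n. -/
open MeasureTheory Real Set ENNReal

noncomputable section

/-!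
Iterating `u₁ u_k ≤ u₀ u_{k+1}` gives `u₁^k ≤ u₀^(k-1) u_k` for `k ≥ 1`, which bounds the
binomial expansion of `(u₀ + u₁)^n` term by term by the expansion of
`u₀^(n-1) (u₀ + ∑ C(n,k) u_k)`.
-/

section Affiliation

variable {R : Type*} [CommSemiring R] [PartialOrder R] [IsOrderedRing R]

theorem pow_mul_le_pow_mul_of_mul_le_mul {a b : R} {u : ℕ → R} {n : ℕ} (ha : 0 ≤ a)
    (hb : 0 ≤ b) (h : ∀ k < n, b * u k ≤ a * u (k + 1)) :
    ∀ k ≤ n, b ^ k * u 0 ≤ a ^ k * u k := by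
  intro k hk
  induction k with
  | zero => simp
  | succ k ih =>
    calc b ^ (k + 1) * u 0 = b * (b ^ k * u 0) := by ring
      _ ≤ b * (a ^ k * u k) := mul_le_mul_of_nonneg_left (ih (by omega)) hb
      _ = a ^ k * (b * u k) := by ring
      _ ≤ a ^ k * (a * u (k + 1)) := mul_le_mul_of_nonneg_left (h k hk) (pow_nonneg ha k)
      _ = a ^ (k + 1) * u (k + 1) := by ring

theorem add_pow_le_pow_mul_binomial_sum {n : ℕ} {u : ℕ → R} (h0 : 0 ≤ u 0) (h1 : 0 ≤ u 1)
    (h : ∀ k < n, u 1 * u (k + 1) ≤ u 0 * u (k + 2)) :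
    (u 0 + u 1) ^ (n + 1) ≤
      u 0 ^ n * (u 0 + ∑ k ∈ Finset.Icc 1 (n + 1), ((n + 1).choose k : R) * u k) := by
  have hterm : ∀ k ≤ n, u 1 ^ (k + 1) * u 0 ^ (n - k) ≤ u 0 ^ n * u (k + 1) := fun k hk => by
    have hk' := pow_mul_le_pow_mul_of_mul_le_mul (u := fun j => u (j + 1)) h0 h1 h k hk
    calc u 1 ^ (k + 1) * u 0 ^ (n - k) = u 1 ^ k * u 1 * u 0 ^ (n - k) := by rw [pow_succ]
      _ ≤ u 0 ^ k * u (k + 1) * u 0 ^ (n - k) :=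
        mul_le_mul_of_nonneg_right hk' (pow_nonneg h0 _)
      _ = u 0 ^ (k + (n - k)) * u (k + 1) := by ring
      _ = u 0 ^ n * u (k + 1) := by rw [Nat.add_sub_cancel' hk]
  have hIcc : ∑ k ∈ Finset.Icc 1 (n + 1), ((n + 1).choose k : R) * u k =
      ∑ k ∈ Finset.range (n + 1), ((n + 1).choose (k + 1) : R) * u (k + 1) := by
    rw [← Finset.Ico_add_one_right_eq_Icc, Finset.sum_Ico_eq_sum_range]
    simp only [Nat.add_sub_cancel, add_comm 1]
  rw [add_comm, add_pow, Finset.sum_range_succ', hIcc, mul_add, Finset.mul_sum, add_comm]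
  simp only [pow_zero, one_mul, Nat.sub_zero, Nat.choose_zero_right, Nat.cast_one, mul_one,
    Nat.succ_sub_succ]
  refine add_le_add (pow_succ _ _).le (Finset.sum_le_sum fun k hk => ?_)
  rw [mul_left_comm, mul_comm _ (_ * u (k + 1))]
  exact mul_le_mul_of_nonneg_right (hterm k (Finset.mem_range_succ_iff.mp hk)) (by positivity)

end Affiliation

/-- if `u₀,…,uₙ ≥ 0` satisfy the affiliation inequalities
`u₀ u_{k+1} ≥ u₁ u_k` for `0 ≤ k ≤ n-1`, then
`u₀^{n-1} (u₀ + Σ_{k=1}^n C(n,k) u_k) ≥ (u₀ + u₁)^n`; in particular if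
`u₀ + Σ_{k=1}^n C(n,k) u_k = 1` then `u₀^{n-1} ≥ (u₀ + u₁)^n`. -/
theorem stmt12 (n : ℕ) (hn : 2 ≤ n) (u : ℕ → ℝ) (hu : ∀ k ≤ n, 0 ≤ u k)
    (haff : ∀ k ≤ n - 1, u 1 * u k ≤ u 0 * u (k + 1)) :
    (u 0 + u 1) ^ n ≤ u 0 ^ (n - 1) * (u 0 + ∑ k ∈ Finset.Icc 1 n, (n.choose k : ℝ) * u k) ∧
    (u 0 + ∑ k ∈ Finset.Icc 1 n, (n.choose k : ℝ) * u k = 1 →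
      (u 0 + u 1) ^ n ≤ u 0 ^ (n - 1)) := by
  obtain ⟨m, rfl⟩ : ∃ m, n = m + 1 := ⟨n - 1, by omega⟩
  have hmain := add_pow_le_pow_mul_binomial_sum (n := m) (hu 0 (by omega)) (hu 1 (by omega))
    fun k hk => haff (k + 1) (by omega)
  exact ⟨hmain, fun hsum => by simpa [hsum] using hmain⟩

end
end
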